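/- Consider the rational map Φ(x,y) = ( −(x² + y² + y)/(2x² + 2y² − 2x + 2y + 1), (−x² − y² + x)/(2x² + 2y² − 2x + 2y + 1) ) on ℝ² (the Kahan–Hirota–Kimura map Φ_{1,ε} of the isochronous system S₁ taken with ε = 1). Then Φ is globally 4-periodic: for every point p ∈ ℝ² such that the denominator 2x² + 2y² − 2x + 2y + 1 is nonzero at p, Φ(p), Φ²(p) and Φ³(p), one has Φ⁴(p) = p. -/
import Mathlib


/-- Denominator of the KHK map `Φ_{1,ε}` of the system `S₁` with `ε = 1`. -/
noncomputable def Qd (q : ℝ × ℝ) : ℝ :=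
  2 * q.1 ^ 2 + 2 * q.2 ^ 2 - 2 * q.1 + 2 * q.2 + 1

/-- The KHK map `Φ_{1,ε}` of the isochronous system `S₁` with `ε = 1`. -/
noncomputable def Phi (q : ℝ × ℝ) : ℝ × ℝ :=
  (-(q.1 ^ 2 + q.2 ^ 2 + q.2) / Qd q, (-q.1 ^ 2 - q.2 ^ 2 + q.1) / Qd q)

noncomputable def nA (X Y d : ℝ) : ℝ := -(X ^ 2 + Y ^ 2 + Y * d)
noncomputable def nB (X Y d : ℝ) : ℝ := -X ^ 2 - Y ^ 2 + X * d
noncomputable def nD (X Y d : ℝ) : ℝ :=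
  2 * X ^ 2 + 2 * Y ^ 2 - 2 * X * d + 2 * Y * d + d ^ 2

lemma qd_div (X Y d : ℝ) (hd : d ≠ 0) :
    Qd (X / d, Y / d) = nD X Y d / d ^ 2 := by
  simp only [Qd, nD]; field_simp

lemma phi_div (X Y d : ℝ) (hd : d ≠ 0) :
    Phi (X / d, Y / d) = (nA X Y d / nD X Y d, nB X Y d / nD X Y d) := by
  simp only [Phi, qd_div X Y d hd]
  rcases eq_or_ne (nD X Y d) 0 with h | h
  · simp [h]
  · refine Prod.ext ?_ ?_ <;> simp only [nA, nB] <;> field_simp <;> ring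

/-- The map `Φ` is globally 4-periodic: `Φ⁴(p) = p` whenever the denominator is
nonzero at `p`, `Φ(p)`, `Φ²(p)` and `Φ³(p)`. -/
theorem stmt_16 (q : ℝ × ℝ) (h0 : Qd q ≠ 0) (h1 : Qd (Phi q) ≠ 0)
    (h2 : Qd (Phi (Phi q)) ≠ 0) (h3 : Qd (Phi (Phi (Phi q))) ≠ 0) :
    Phi (Phi (Phi (Phi q))) = q := by
  obtain ⟨x, y⟩ := q
  have e0 : (x, y) = (x / 1, y / 1) := by norm_num
  set X1 := nA x y 1 with hX1
  set Y1 := nB x y 1 with hY1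
  set D1 := nD x y 1 with hD1
  have hQ0 : D1 ≠ 0 := by
    intro h; apply h0; rw [e0, qd_div x y 1 one_ne_zero, ← hD1, h]; simp
  have e1 : Phi (x, y) = (X1 / D1, Y1 / D1) := by
    rw [e0]; exact phi_div x y 1 one_ne_zero
  set X2 := nA X1 Y1 D1 with hX2
  set Y2 := nB X1 Y1 D1 with hY2
  set D2 := nD X1 Y1 D1 with hD2
  have hQ1 : D2 ≠ 0 := by
    intro h; apply h1; rw [e1, qd_div X1 Y1 D1 hQ0, ← hD2, h]; simp
  have e2 : Phi (Phi (x, y)) = (X2 / D2, Y2 / D2) := by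
    rw [e1]; exact phi_div X1 Y1 D1 hQ0
  set X3 := nA X2 Y2 D2 with hX3
  set Y3 := nB X2 Y2 D2 with hY3
  set D3 := nD X2 Y2 D2 with hD3
  have hQ2 : D3 ≠ 0 := by
    intro h; apply h2; rw [e2, qd_div X2 Y2 D2 hQ1, ← hD3, h]; simp
  have e3 : Phi (Phi (Phi (x, y))) = (X3 / D3, Y3 / D3) := by
    rw [e2]; exact phi_div X2 Y2 D2 hQ1
  have hQ3 : nD X3 Y3 D3 ≠ 0 := by
    intro h; apply h3; rw [e3, qd_div X3 Y3 D3 hQ2, h]; simp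
  rw [e3, phi_div X3 Y3 D3 hQ2]
  refine Prod.ext ?_ ?_ <;>
    simp only [hX3, hY3, hD3, hX2, hY2, hD2, hX1, hY1, hD1, nA, nB, nD] at hQ3 ⊢ <;>
    rw [div_eq_iff hQ3] <;> ring
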